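/- arXiv:1903.07861 — 2 statements merged into one kernel-verified Lean document; each statement's English description precedes it below -/
import Mathlib

section
/- Let ξ = (ξ_1, ξ_2, …) be an infinite sequence of random variables with values in a standard Borel space S, with empirical distributions η_n = n⁻¹ ∑_{i=1}^n δ_{ξ_i}. If η is a reverse measure-valued martingale with respect to the tail σ-fields 𝒯_n = σ(η_n, η_{n+1}, …), then for every n ≥ 2 one has (ξ_1, ξ_n, ξ_{n+1}, ξ_{n+2}, …) equal in distribution to (ξ_n, ξ_1, ξ_{n+1}, ξ_{n+2}, …); in particular ξ_1 has the same distribution as ξ_n for every n. -/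
open MeasureTheory ProbabilityTheory
open scoped ENNReal

/-- The empirical distribution `η_n = n⁻¹ ∑_{i=1}^n δ_{ξ_i}` of the first `n` terms of
the sequence `ξ` (indexed from `0`). -/
noncomputable def empDist {Ω S : Type*} [MeasurableSpace S] (ξ : ℕ → Ω → S) (n : ℕ) (ω : Ω) :
    Measure S :=
  (n : ℝ≥0∞)⁻¹ • ∑ i ∈ Finset.range n, Measure.dirac (ξ i ω)

/-- The tail σ-field `𝒯_n = σ(η_n, η_{n+1}, …)` generated by the empirical distributions. -/
noncomputable def tailField {Ω S : Type*} [MeasurableSpace S] (ξ : ℕ → Ω → S) (n : ℕ) :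
    MeasurableSpace Ω :=
  ⨆ k, ⨆ _ : n ≤ k, MeasurableSpace.comap (empDist ξ k) inferInstance

/-- `η` is a reverse measure-valued martingale: for every bounded measurable `f` and all
`1 ≤ k ≤ n`, `E[η_k f | 𝒯_n] = η_n f` a.s. -/
def IsReverseMVM {Ω S : Type*} [MeasurableSpace Ω] [MeasurableSpace S]
    (P : Measure Ω) (ξ : ℕ → Ω → S) : Prop :=
  ∀ f : S → ℝ, Measurable f → (∃ C, ∀ x, |f x| ≤ C) →
    ∀ k n : ℕ, 1 ≤ k → k ≤ n →
      P[(fun ω => ∫ x, f x ∂(empDist ξ k ω)) | tailField ξ n]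
        =ᵐ[P] fun ω => ∫ x, f x ∂(empDist ξ n ω)

/-- `ξ` is exchangeable: any finite subfamily with distinct indices has the same joint
distribution as the initial segment of the same length. -/
def Exchangeable {Ω S : Type*} [MeasurableSpace Ω] [MeasurableSpace S]
    (P : Measure Ω) (ξ : ℕ → Ω → S) : Prop :=
  ∀ (m : ℕ) (k : Fin m → ℕ), Function.Injective k →
    Measure.map (fun ω (i : Fin m) => ξ (k i) ω) P
      = Measure.map (fun ω (i : Fin m) => ξ (i : ℕ) ω) P

/-- `ξ` is stationary: the shifted sequence has the same distribution as `ξ`. -/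
def Stationary {Ω S : Type*} [MeasurableSpace Ω] [MeasurableSpace S]
    (P : Measure Ω) (ξ : ℕ → Ω → S) : Prop :=
  Measure.map (fun ω (i : ℕ) => ξ (i + 1) ω) P = Measure.map (fun ω (i : ℕ) => ξ i ω) P

/-- `ξ` is a homogeneous Markov sequence with transition kernel `κ`. -/
def IsHomogeneousMarkov {Ω S : Type*} [MeasurableSpace Ω] [MeasurableSpace S]
    (P : Measure Ω) (ξ : ℕ → Ω → S) : Prop :=
  ∃ κ : Kernel S S, IsMarkovKernel κ ∧
    ∀ n : ℕ, ∀ f : S → ℝ, Measurable f → (∃ C, ∀ x, |f x| ≤ C) →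
      P[(fun ω => f (ξ (n + 1) ω)) |
          MeasurableSpace.comap (fun ω (i : Fin (n + 1)) => ξ (i : ℕ) ω) inferInstance]
        =ᵐ[P] fun ω => ∫ y, f y ∂(κ (ξ n ω))

/-!
Write `η_k f` for `∫ f ∂η_k`. Since `f (ξ_j) = (j + 1) η_{j+1} f - j η_j f`, each `ξ_j` with
`j ≥ n` is `𝒯_n`-measurable, and the martingale property yields `E[f (ξ_j) | 𝒯_n] = η_n f`
for `j < n`. For `i < m`, conditioning first on `𝒯_m` and then on `𝒯_{m+1}` gives
`E[f (ξ_i) g (ξ_m) | 𝒯_{m+1}] = ((m + 1) η_{m+1} f · η_{m+1} g - η_{m+1} (f g)) / m`,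
which is symmetric in `f` and `g`. So `(ξ_i, ξ_m)` is exchangeable conditionally on `𝒯_{m+1}`,
a σ-field containing `σ(ξ_{m+1}, ξ_{m+2}, …)`; the theorem is the case `i = 0`.
-/

open Filter

section EmpiricalDistribution

variable {Ω S : Type*} [MeasurableSpace S] (ξ : ℕ → Ω → S)

lemma empDist_apply (n : ℕ) (ω : Ω) {A : Set S} (hA : MeasurableSet A) :
    empDist ξ n ω A = (n : ℝ≥0∞)⁻¹ * ∑ i ∈ Finset.range n, A.indicator 1 (ξ i ω) := by
  simp [empDist, Measure.dirac_apply' _ hA]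

lemma integral_empDist {f : S → ℝ} (hf : StronglyMeasurable f) (n : ℕ) (ω : Ω) :
    ∫ x, f x ∂(empDist ξ n ω) = (n : ℝ)⁻¹ * ∑ i ∈ Finset.range n, f (ξ i ω) := by
  rw [empDist, integral_smul_measure,
    integral_finsetSum_measure fun i _ => integrable_dirac' hf (by simp)]
  simp [integral_dirac' _ _ hf]

lemma apply_eq_integral_empDist_succ_sub {f : S → ℝ} (hf : StronglyMeasurable f) (j : ℕ)
    (ω : Ω) :
    f (ξ j ω) = ((j : ℝ) + 1) * ∫ x, f x ∂(empDist ξ (j + 1) ω)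
      - j * ∫ x, f x ∂(empDist ξ j ω) := by
  rw [integral_empDist ξ hf, integral_empDist ξ hf, Finset.sum_range_succ]
  rcases j.eq_zero_or_pos with rfl | hj
  · simp
  · push_cast
    field_simp
    ring

end EmpiricalDistribution

section TailField

variable {Ω S : Type*} [MeasurableSpace S] {ξ : ℕ → Ω → S}

lemma measurable_empDist [MeasurableSpace Ω] (hmeas : ∀ i, Measurable (ξ i)) (n : ℕ) :
    Measurable (empDist ξ n) := by
  refine Measure.measurable_of_measurable_coe _ fun A hA => ?_
  simp_rw [empDist_apply ξ _ _ hA]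
  exact (Finset.measurable_sum _ fun i _ =>
    (measurable_one.indicator hA).comp (hmeas i)).const_mul _

lemma measurable_empDist_tailField {n k : ℕ} (hnk : n ≤ k) :
    Measurable[tailField ξ n] (empDist ξ k) :=
  Measurable.of_comap_le (le_iSup₂_of_le k hnk le_rfl)

lemma tailField_le [mΩ : MeasurableSpace Ω] (hmeas : ∀ i, Measurable (ξ i)) (n : ℕ) :
    tailField ξ n ≤ mΩ :=
  iSup₂_le fun k _ => (measurable_empDist hmeas k).comap_le

lemma tailField_antitone : Antitone (tailField ξ) := fun _ _ h =>
  iSup₂_le fun k hk => le_iSup₂_of_le k (h.trans hk) le_rfl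

lemma stronglyMeasurable_integral_empDist {f : S → ℝ} (hf : StronglyMeasurable f) {n k : ℕ}
    (hnk : n ≤ k) :
    StronglyMeasurable[tailField ξ n] fun ω => ∫ x, f x ∂(empDist ξ k ω) :=
  hf.integral_kernel (κ := @Kernel.mk Ω S (tailField ξ n) _ (empDist ξ k)
    (measurable_empDist_tailField hnk))

lemma measurable_tailField {n j : ℕ} (hnj : n ≤ j) : Measurable[tailField ξ n] (ξ j) := by
  intro A hA
  have hind : StronglyMeasurable[tailField ξ n] fun ω => A.indicator (1 : S → ℝ) (ξ j ω) := by
    have hA1 : StronglyMeasurable (A.indicator (1 : S → ℝ)) :=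
      stronglyMeasurable_one.indicator hA
    rw [funext (apply_eq_integral_empDist_succ_sub ξ hA1 j)]
    exact ((stronglyMeasurable_integral_empDist hA1 (hnj.trans j.le_succ)).const_mul _).sub
      ((stronglyMeasurable_integral_empDist hA1 hnj).const_mul _)
  have hpre : ξ j ⁻¹' A = (fun ω => A.indicator (1 : S → ℝ) (ξ j ω)) ⁻¹' {1} := by
    ext ω
    by_cases h : ξ j ω ∈ A <;> simp [h]
  rw [hpre]
  exact hind.measurable (measurableSet_singleton 1)

end TailField

section ReverseMartingale

variable {Ω S : Type*} [MeasurableSpace Ω] [MeasurableSpace S] {P : Measure Ω}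
  [IsFiniteMeasure P] {ξ : ℕ → Ω → S}

lemma integrable_comp_of_abs_le {X : Ω → S} (hX : Measurable X) {f : S → ℝ} (hf : Measurable f)
    {C : ℝ} (hfC : ∀ x, |f x| ≤ C) : Integrable (fun ω => f (X ω)) P :=
  .of_bound (hf.comp hX).aestronglyMeasurable C (ae_of_all _ fun ω => hfC (X ω))

lemma integrable_comp_mul_comp_of_abs_le {X Y : Ω → S} (hX : Measurable X) (hY : Measurable Y)
    {f g : S → ℝ} (hf : Measurable f) {C : ℝ} (hfC : ∀ x, |f x| ≤ C) (hg : Measurable g) {D : ℝ}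
    (hgD : ∀ x, |g x| ≤ D) : Integrable (fun ω => f (X ω) * g (Y ω)) P :=
  (integrable_comp_of_abs_le hX hf hfC).mul_bdd (hg.comp hY).aestronglyMeasurable
    (ae_of_all _ fun ω => hgD (Y ω))

lemma integrable_integral_empDist (hmeas : ∀ i, Measurable (ξ i)) {f : S → ℝ}
    (hf : Measurable f) {C : ℝ} (hfC : ∀ x, |f x| ≤ C) (k : ℕ) :
    Integrable (fun ω => ∫ x, f x ∂(empDist ξ k ω)) P := by
  simp_rw [integral_empDist ξ hf.stronglyMeasurable]
  exact (integrable_finsetSum _ fun i _ => integrable_comp_of_abs_le (hmeas i) hf hfC).const_mul _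

theorem condExp_comp_eq_integral_empDist (hmeas : ∀ i, Measurable (ξ i))
    (hmart : IsReverseMVM P ξ) {f : S → ℝ} (hf : Measurable f) {C : ℝ} (hfC : ∀ x, |f x| ≤ C)
    {j n : ℕ} (hjn : j < n) :
    P[fun ω => f (ξ j ω) | tailField ξ n] =ᵐ[P] fun ω => ∫ x, f x ∂(empDist ξ n ω) := by
  set η : ℕ → Ω → ℝ := fun k ω => ∫ x, f x ∂(empDist ξ k ω)
  have hη : ∀ k, Integrable (η k) P := integrable_integral_empDist hmeas hf hfC
  have hsucc : P[η (j + 1) | tailField ξ n] =ᵐ[P] η n :=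
    hmart f hf ⟨C, hfC⟩ _ _ j.succ_pos hjn
  have hself : (j : ℝ) • P[η j | tailField ξ n] =ᵐ[P] (j : ℝ) • η n := by
    rcases j.eq_zero_or_pos with rfl | hj
    · simp
    · exact (hmart f hf ⟨C, hfC⟩ j n hj hjn.le).const_smul _
  have hcomb : (fun ω => f (ξ j ω)) = ((j : ℝ) + 1) • η (j + 1) - (j : ℝ) • η j :=
    funext (apply_eq_integral_empDist_succ_sub ξ hf.stronglyMeasurable j)
  calc P[fun ω => f (ξ j ω) | tailField ξ n]
      = P[((j : ℝ) + 1) • η (j + 1) - (j : ℝ) • η j | tailField ξ n] := by rw [hcomb]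
    _ =ᵐ[P] ((j : ℝ) + 1) • P[η (j + 1) | tailField ξ n] - (j : ℝ) • P[η j | tailField ξ n] :=
      (condExp_sub ((hη _).smul _) ((hη _).smul _) _).trans
        ((condExp_smul _ _ _).sub (condExp_smul _ _ _))
    _ =ᵐ[P] ((j : ℝ) + 1) • η n - (j : ℝ) • η n := (hsucc.const_smul _).sub hself
    _ = η n := by
      ext ω
      simp only [Pi.sub_apply, Pi.smul_apply, smul_eq_mul]
      ring

lemma condExp_comp_mul_comp_ae_eq_condExp_integral_empDist_mul
    (hmeas : ∀ i, Measurable (ξ i)) (hmart : IsReverseMVM P ξ) {f g : S → ℝ}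
    (hf : Measurable f) {C : ℝ} (hfC : ∀ x, |f x| ≤ C) (hg : Measurable g) {D : ℝ}
    (hgD : ∀ x, |g x| ≤ D) {i m : ℕ} (him : i < m) :
    P[fun ω => f (ξ i ω) * g (ξ m ω) | tailField ξ (m + 1)] =ᵐ[P]
      P[fun ω => (∫ x, f x ∂(empDist ξ m ω)) * g (ξ m ω) | tailField ξ (m + 1)] := by
  have hgm : StronglyMeasurable[tailField ξ m] fun ω => g (ξ m ω) :=
    (hg.comp (measurable_tailField le_rfl)).stronglyMeasurable
  have hpull : P[fun ω => f (ξ i ω) * g (ξ m ω) | tailField ξ m] =ᵐ[P]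
      fun ω => (∫ x, f x ∂(empDist ξ m ω)) * g (ξ m ω) :=
    (condExp_mul_of_stronglyMeasurable_right hgm
      (integrable_comp_mul_comp_of_abs_le (hmeas i) (hmeas m) hf hfC hg hgD)
      (integrable_comp_of_abs_le (hmeas i) hf hfC)).trans
    ((condExp_comp_eq_integral_empDist hmeas hmart hf hfC him).mul EventuallyEq.rfl)
  exact (condExp_condExp_of_le (tailField_antitone m.le_succ) (tailField_le hmeas m)).symm.trans
    (condExp_congr_ae hpull)

lemma condExp_integral_empDist_mul_comp_ae_eq (hmeas : ∀ i, Measurable (ξ i))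
    (hmart : IsReverseMVM P ξ) {f g : S → ℝ} (hf : Measurable f) {C : ℝ} (hfC : ∀ x, |f x| ≤ C)
    (hg : Measurable g) {D : ℝ} (hgD : ∀ x, |g x| ≤ D) {m : ℕ} (hm : m ≠ 0) :
    P[fun ω => (∫ x, f x ∂(empDist ξ m ω)) * g (ξ m ω) | tailField ξ (m + 1)] =ᵐ[P]
      fun ω => (m : ℝ)⁻¹ * (((m : ℝ) + 1) * ((∫ x, f x ∂(empDist ξ (m + 1) ω))
        * ∫ x, g x ∂(empDist ξ (m + 1) ω)) - ∫ x, f x * g x ∂(empDist ξ (m + 1) ω)) := by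
  set η : (S → ℝ) → Ω → ℝ := fun h ω => ∫ x, h x ∂(empDist ξ (m + 1) ω)
  have hfgCD : ∀ x, |f x * g x| ≤ C * D := fun x => by
    rw [abs_mul]
    exact mul_le_mul (hfC x) (hgD x) (abs_nonneg _) ((abs_nonneg _).trans (hfC x))
  have hA : Integrable (fun ω => η f ω * g (ξ m ω)) P :=
    (integrable_integral_empDist hmeas hf hfC _).mul_bdd
      (hg.comp (hmeas m)).aestronglyMeasurable (ae_of_all _ fun ω => hgD _)
  have hB : Integrable (fun ω => f (ξ m ω) * g (ξ m ω)) P :=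
    integrable_comp_of_abs_le (hmeas m) (hf.mul hg) hfgCD
  -- `f (ξ m) = (m + 1) η_{m+1} f - m η_m f` solved for `η_m f`
  have hrec : (fun ω => (∫ x, f x ∂(empDist ξ m ω)) * g (ξ m ω)) = (m : ℝ)⁻¹ •
      (((m : ℝ) + 1) • (fun ω => η f ω * g (ξ m ω)) - fun ω => f (ξ m ω) * g (ξ m ω)) := by
    ext ω
    have h := apply_eq_integral_empDist_succ_sub ξ hf.stronglyMeasurable m ω
    have hm' : (m : ℝ) ≠ 0 := Nat.cast_ne_zero.mpr hm
    simp only [Pi.smul_apply, Pi.sub_apply, smul_eq_mul, η]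
    field_simp
    linear_combination g (ξ m ω) * h
  have hAη : P[fun ω => η f ω * g (ξ m ω) | tailField ξ (m + 1)] =ᵐ[P] η f * η g :=
    (condExp_mul_of_stronglyMeasurable_left
      (stronglyMeasurable_integral_empDist hf.stronglyMeasurable le_rfl) hA
      (integrable_comp_of_abs_le (hmeas m) hg hgD)).trans
    (EventuallyEq.rfl.mul (condExp_comp_eq_integral_empDist hmeas hmart hg hgD m.lt_succ_self))
  have hBη : P[fun ω => f (ξ m ω) * g (ξ m ω) | tailField ξ (m + 1)] =ᵐ[P] η fun x => f x * g x :=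
    condExp_comp_eq_integral_empDist hmeas hmart (hf.mul hg) hfgCD m.lt_succ_self
  calc P[fun ω => (∫ x, f x ∂(empDist ξ m ω)) * g (ξ m ω) | tailField ξ (m + 1)]
      = P[(m : ℝ)⁻¹ • (((m : ℝ) + 1) • (fun ω => η f ω * g (ξ m ω))
          - fun ω => f (ξ m ω) * g (ξ m ω)) | tailField ξ (m + 1)] := by rw [hrec]
    _ =ᵐ[P] (m : ℝ)⁻¹ • (((m : ℝ) + 1) • P[fun ω => η f ω * g (ξ m ω) | tailField ξ (m + 1)]
          - P[fun ω => f (ξ m ω) * g (ξ m ω) | tailField ξ (m + 1)]) :=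
      (condExp_smul _ _ _).trans <| EventuallyEq.const_smul
        ((condExp_sub (hA.smul _) hB _).trans ((condExp_smul _ _ _).sub EventuallyEq.rfl)) _
    _ =ᵐ[P] (m : ℝ)⁻¹ • (((m : ℝ) + 1) • (η f * η g) - η fun x => f x * g x) :=
      ((hAη.const_smul _).sub hBη).const_smul _
    _ = _ := rfl

theorem condExp_comp_mul_comp_ae_eq (hmeas : ∀ i, Measurable (ξ i)) (hmart : IsReverseMVM P ξ)
    {f g : S → ℝ} (hf : Measurable f) {C : ℝ} (hfC : ∀ x, |f x| ≤ C) (hg : Measurable g) {D : ℝ}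
    (hgD : ∀ x, |g x| ≤ D) {i m : ℕ} (him : i < m) :
    P[fun ω => f (ξ i ω) * g (ξ m ω) | tailField ξ (m + 1)] =ᵐ[P]
      fun ω => (m : ℝ)⁻¹ * (((m : ℝ) + 1) * ((∫ x, f x ∂(empDist ξ (m + 1) ω))
        * ∫ x, g x ∂(empDist ξ (m + 1) ω)) - ∫ x, f x * g x ∂(empDist ξ (m + 1) ω)) :=
  (condExp_comp_mul_comp_ae_eq_condExp_integral_empDist_mul hmeas hmart hf hfC hg hgD him).trans
    (condExp_integral_empDist_mul_comp_ae_eq hmeas hmart hf hfC hg hgD (Nat.ne_zero_of_lt him))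

theorem condExp_comp_mul_comp_comm (hmeas : ∀ i, Measurable (ξ i)) (hmart : IsReverseMVM P ξ)
    {f g : S → ℝ} (hf : Measurable f) {C : ℝ} (hfC : ∀ x, |f x| ≤ C) (hg : Measurable g) {D : ℝ}
    (hgD : ∀ x, |g x| ≤ D) {i m : ℕ} (him : i < m) :
    P[fun ω => f (ξ i ω) * g (ξ m ω) | tailField ξ (m + 1)] =ᵐ[P]
      P[fun ω => g (ξ i ω) * f (ξ m ω) | tailField ξ (m + 1)] := by
  filter_upwards [condExp_comp_mul_comp_ae_eq hmeas hmart hf hfC hg hgD him,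
    condExp_comp_mul_comp_ae_eq hmeas hmart hg hgD hf hfC him] with ω hfg hgf
  rw [hfg, hgf, funext fun x => mul_comm (g x) (f x)]
  ring

theorem setIntegral_comp_mul_comp_comm (hmeas : ∀ i, Measurable (ξ i))
    (hmart : IsReverseMVM P ξ) {f g : S → ℝ} (hf : Measurable f) {C : ℝ}
    (hfC : ∀ x, |f x| ≤ C) (hg : Measurable g) {D : ℝ} (hgD : ∀ x, |g x| ≤ D) {i m : ℕ}
    (him : i < m) {E : Set Ω} (hE : MeasurableSet[tailField ξ (m + 1)] E) :
    ∫ ω in E, f (ξ i ω) * g (ξ m ω) ∂P = ∫ ω in E, g (ξ i ω) * f (ξ m ω) ∂P := by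
  have hle := tailField_le hmeas (m + 1)
  rw [← setIntegral_condExp hle
      (integrable_comp_mul_comp_of_abs_le (hmeas i) (hmeas m) hf hfC hg hgD) hE,
    ← setIntegral_condExp hle
      (integrable_comp_mul_comp_of_abs_le (hmeas i) (hmeas m) hg hgD hf hfC) hE]
  refine setIntegral_congr_ae (hle E hE) ?_
  filter_upwards [condExp_comp_mul_comp_comm hmeas hmart hf hfC hg hgD him] with ω h _ using h

theorem measure_preimage_inter_preimage_inter_comm (hmeas : ∀ i, Measurable (ξ i))
    (hmart : IsReverseMVM P ξ) {i m : ℕ} (him : i < m) {s t : Set S} (hs : MeasurableSet s)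
    (ht : MeasurableSet t) {E : Set Ω} (hE : MeasurableSet[tailField ξ (m + 1)] E) :
    P (ξ i ⁻¹' s ∩ ξ m ⁻¹' t ∩ E) = P (ξ m ⁻¹' s ∩ ξ i ⁻¹' t ∩ E) := by
  have hind : ∀ a b, ∫ ω in E, s.indicator (1 : S → ℝ) (ξ a ω) * t.indicator 1 (ξ b ω) ∂P
      = P.real (ξ a ⁻¹' s ∩ ξ b ⁻¹' t ∩ E) := fun a b => by
    have hprod : (fun ω => s.indicator (1 : S → ℝ) (ξ a ω) * t.indicator 1 (ξ b ω))
        = (ξ a ⁻¹' s ∩ ξ b ⁻¹' t).indicator 1 := by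
      ext ω
      by_cases ha : ξ a ω ∈ s <;> by_cases hb : ξ b ω ∈ t <;> simp [ha, hb]
    have hab : MeasurableSet (ξ a ⁻¹' s ∩ ξ b ⁻¹' t) := (hmeas a hs).inter (hmeas b ht)
    rw [hprod, integral_indicator_one hab, measureReal_restrict_apply hab]
  have hbound (A : Set S) (x : S) : |A.indicator (1 : S → ℝ) x| ≤ 1 := by
    by_cases hx : x ∈ A <;> simp [hx]
  have h := setIntegral_comp_mul_comp_comm hmeas hmart (measurable_one.indicator hs)
    (hbound s) (measurable_one.indicator ht) (hbound t) him hE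
  rw [funext fun ω => mul_comm (t.indicator (1 : S → ℝ) (ξ i ω)) _, hind, hind] at h
  exact (measureReal_eq_measureReal_iff (measure_ne_top _ _) (measure_ne_top _ _)).mp h

theorem map_prodMk_comm_of_measurable_tailField (hmeas : ∀ i, Measurable (ξ i))
    (hmart : IsReverseMVM P ξ) {β : Type*} [MeasurableSpace β] {i m : ℕ} (him : i < m)
    {Z : Ω → β} (hZ : Measurable[tailField ξ (m + 1)] Z) :
    P.map (fun ω => (ξ i ω, ξ m ω, Z ω)) = P.map (fun ω => (ξ m ω, ξ i ω, Z ω)) := by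
  have hZ' : Measurable Z := hZ.mono (tailField_le hmeas _) le_rfl
  refine Measure.ext_prod₃ fun hs ht hu => ?_
  rw [Measure.map_apply ((hmeas i).prodMk ((hmeas m).prodMk hZ')) (hs.prod (ht.prod hu)),
    Measure.map_apply ((hmeas m).prodMk ((hmeas i).prodMk hZ')) (hs.prod (ht.prod hu))]
  simp only [Set.mk_preimage_prod, ← Set.inter_assoc]
  exact measure_preimage_inter_preimage_inter_comm hmeas hmart him hs ht (hZ hu)

theorem map_eq_map_of_lt (hmeas : ∀ i, Measurable (ξ i)) (hmart : IsReverseMVM P ξ) {i m : ℕ}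
    (him : i < m) : P.map (ξ m) = P.map (ξ i) := by
  have h := congrArg (Measure.map Prod.fst) <| map_prodMk_comm_of_measurable_tailField hmeas
    hmart him (Z := fun _ => ()) measurable_const
  rwa [Measure.map_map measurable_fst ((hmeas i).prodMk ((hmeas m).prodMk measurable_const)),
    Measure.map_map measurable_fst ((hmeas m).prodMk ((hmeas i).prodMk measurable_const)),
    eq_comm] at h

end ReverseMartingale

/-- `ξ` is indexed from `0`, so the paper's one-based `ξ_j` is `ξ (j - 1)`. -/
theorem swap_first_with_nth_of_isReverseMVM_general
    {Ω S : Type*} [MeasurableSpace Ω] [MeasurableSpace S]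
    (P : Measure Ω) [IsProbabilityMeasure P] (ξ : ℕ → Ω → S)
    (hmeas : ∀ i, Measurable (ξ i)) (hmart : IsReverseMVM P ξ) :
    (∀ n : ℕ, 2 ≤ n →
      Measure.map
        (fun ω (k : ℕ) => ξ (if k = 0 then 0 else n + k - 2) ω) P
      = Measure.map
        (fun ω (k : ℕ) => ξ (if k = 0 then n - 1 else if k = 1 then 0 else n + k - 2) ω) P) ∧
    ∀ n : ℕ, Measure.map (ξ n) P = Measure.map (ξ 0) P := by
  refine ⟨fun n hn => ?_, fun n => ?_⟩
  · obtain ⟨m, rfl⟩ : ∃ m, n = m + 2 := ⟨n - 2, by omega⟩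
    let Φ : S × S × (ℕ → S) → ℕ → S := fun p k =>
      if k = 0 then p.1 else if k = 1 then p.2.1 else p.2.2 (k - 2)
    have hΦ : Measurable Φ := measurable_pi_lambda _ fun k => by
      dsimp only [Φ]
      split_ifs <;> fun_prop
    have hZ : Measurable[tailField ξ (m + 1 + 1)] fun ω k => ξ (m + 2 + k) ω :=
      @measurable_pi_lambda _ _ _ (tailField ξ _) _ _ fun k => measurable_tailField (by omega)
    have hZ' := hZ.mono (tailField_le hmeas _) le_rfl
    have h := congrArg (Measure.map Φ) <|
      map_prodMk_comm_of_measurable_tailField hmeas hmart m.succ_pos hZ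
    rw [Measure.map_map hΦ ((hmeas 0).prodMk ((hmeas _).prodMk hZ')),
      Measure.map_map hΦ ((hmeas _).prodMk ((hmeas 0).prodMk hZ'))] at h
    convert h using 2 <;> ext ω k <;> rcases k with _ | _ | k <;> simp [Φ] <;> congr 2
  · rcases n with _ | n
    · rfl
    · exact map_eq_map_of_lt hmeas hmart n.succ_pos

/-- If the empirical distributions of an infinite sequence in a standard
Borel space form a reverse measure-valued martingale, then for every `n ≥ 2` (one-based)
the sequence `(ξ_1, ξ_n, ξ_{n+1}, …)` has the same distribution as
`(ξ_n, ξ_1, ξ_{n+1}, …)`; in particular `ξ_1 ≝ ξ_n` for every `n`.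
(Here `ξ` is indexed from `0`, so the one-based variable `ξ_j` is `ξ (j - 1)`.) -/
theorem swap_first_with_nth_of_isReverseMVM
    {Ω S : Type*} [MeasurableSpace Ω] [MeasurableSpace S] [StandardBorelSpace S]
    (P : Measure Ω) [IsProbabilityMeasure P] (ξ : ℕ → Ω → S)
    (hmeas : ∀ i, Measurable (ξ i)) (hmart : IsReverseMVM P ξ) :
    (∀ n : ℕ, 2 ≤ n →
      Measure.map
        (fun ω (k : ℕ) => ξ (if k = 0 then 0 else n + k - 2) ω) P
      = Measure.map
        (fun ω (k : ℕ) => ξ (if k = 0 then n - 1 else if k = 1 then 0 else n + k - 2) ω) P) ∧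
    ∀ n : ℕ, Measure.map (ξ n) P = Measure.map (ξ 0) P :=
  swap_first_with_nth_of_isReverseMVM_general P ξ hmeas hmart
end

section
/- Let ξ = (ξ_1, ξ_2, …) be an infinite sequence of random variables with values in a standard Borel space S, with empirical distributions η_n = n⁻¹ ∑_{i=1}^n δ_{ξ_i}. If η is a reverse measure-valued martingale with respect to the tail σ-fields 𝒯_n = σ(η_n, η_{n+1}, …), then for every k ≥ 1 and every bounded measurable f : S → ℝ, E[f(ξ_k) | 𝒯_k] = η_k f almost surely. -/
open MeasureTheory ProbabilityTheory
open scoped ENNReal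

/-!
Since `k η_k = (k - 1) η_{k-1} + δ_{ξ_k}`, we have `f(ξ_k) = k η_k f - (k - 1) η_{k-1} f`.
Conditioning on `𝒯_k`, the martingale property replaces `η_{k-1} f` by `η_k f`, leaving
`k η_k f - (k - 1) η_k f = η_k f`.
-/

section EmpDist

variable {Ω S : Type*} [MeasurableSpace S] (ξ : ℕ → Ω → S)

theorem natCast_smul_empDist (n : ℕ) (ω : Ω) :
    (n : ℝ≥0∞) • empDist ξ n ω = ∑ i ∈ Finset.range n, Measure.dirac (ξ i ω) := by
  rcases eq_or_ne n 0 with rfl | hn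
  · simp
  · rw [empDist, smul_smul,
      ENNReal.mul_inv_cancel (by exact_mod_cast hn) (ENNReal.natCast_ne_top n), one_smul]

variable {f : S → ℝ}

theorem natCast_mul_integral_empDist (hf : Measurable f) (n : ℕ) (ω : Ω) :
    (n : ℝ) * ∫ x, f x ∂(empDist ξ n ω) = ∑ i ∈ Finset.range n, f (ξ i ω) := by
  have hfm := hf.stronglyMeasurable
  rw [← ENNReal.toReal_natCast, ← smul_eq_mul, ← integral_smul_measure, natCast_smul_empDist,
    integral_finsetSum_measure fun i _ => integrable_dirac' hfm enorm_lt_top]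
  simp only [integral_dirac' f _ hfm]

theorem apply_eq_integral_empDist_sub (hf : Measurable f) (m : ℕ) (ω : Ω) :
    f (ξ m ω) = ((m + 1 : ℕ) : ℝ) * ∫ x, f x ∂(empDist ξ (m + 1) ω)
      - (m : ℝ) * ∫ x, f x ∂(empDist ξ m ω) := by
  rw [natCast_mul_integral_empDist ξ hf, natCast_mul_integral_empDist ξ hf, Finset.sum_range_succ,
    add_sub_cancel_left]

end EmpDist

namespace IsReverseMVM

variable {Ω S : Type*} [MeasurableSpace Ω] [MeasurableSpace S] {P : Measure Ω} {ξ : ℕ → Ω → S}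
  {f : S → ℝ}

/-- `η_n f` agrees a.e. with its own conditional expectation, which is integrable
(for `n = 0` it vanishes). -/
theorem integrable_integral_empDist (hmart : IsReverseMVM P ξ) (hf : Measurable f)
    (hb : ∃ C, ∀ x, |f x| ≤ C) (n : ℕ) :
    Integrable (fun ω => ∫ x, f x ∂(empDist ξ n ω)) P := by
  rcases Nat.eq_zero_or_pos n with rfl | hn
  · simp [empDist]
  · exact integrable_condExp.congr (hmart f hf hb n n hn le_rfl)

theorem natCast_smul_condExp_integral_empDist (hmart : IsReverseMVM P ξ) (hf : Measurable f)
    (hb : ∃ C, ∀ x, |f x| ≤ C) {m n : ℕ} (hmn : m ≤ n) :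
    (m : ℝ) • P[(fun ω => ∫ x, f x ∂(empDist ξ m ω)) | tailField ξ n]
      =ᵐ[P] (m : ℝ) • fun ω => ∫ x, f x ∂(empDist ξ n ω) := by
  rcases Nat.eq_zero_or_pos m with rfl | hm
  · simp
  · exact (hmart f hf hb m n hm hmn).const_smul _

end IsReverseMVM

/-- With zero-based indexing the one-based `ξ_k` is `ξ (k - 1)`. -/
theorem condexp_of_isReverseMVM_general
    {Ω S : Type*} [MeasurableSpace Ω] [MeasurableSpace S]
    (P : Measure Ω) (ξ : ℕ → Ω → S)
    (hmart : IsReverseMVM P ξ) :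
    ∀ k : ℕ, 1 ≤ k → ∀ f : S → ℝ, Measurable f → (∃ C, ∀ x, |f x| ≤ C) →
      P[(fun ω => f (ξ (k - 1) ω)) | tailField ξ k]
        =ᵐ[P] fun ω => ∫ x, f x ∂(empDist ξ k ω) := by
  intro k hk f hf hb
  obtain ⟨m, rfl⟩ : ∃ m, k = m + 1 := ⟨k - 1, by omega⟩
  set η : ℕ → Ω → ℝ := fun n ω => ∫ x, f x ∂(empDist ξ n ω)
  have hdecomp : (fun ω => f (ξ m ω)) = ((m + 1 : ℕ) : ℝ) • η (m + 1) - (m : ℝ) • η m :=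
    funext (apply_eq_integral_empDist_sub ξ hf m)
  have hint := hmart.integrable_integral_empDist hf hb
  calc P[(fun ω => f (ξ (m + 1 - 1) ω)) | tailField ξ (m + 1)]
      =ᵐ[P] ((m + 1 : ℕ) : ℝ) • P[η (m + 1) | tailField ξ (m + 1)]
        - (m : ℝ) • P[η m | tailField ξ (m + 1)] := by
        rw [Nat.add_sub_cancel, hdecomp]
        exact (condExp_sub ((hint _).smul _) ((hint _).smul _) _).trans
          ((condExp_smul _ _ _).sub (condExp_smul _ _ _))
    _ =ᵐ[P] ((m + 1 : ℕ) : ℝ) • η (m + 1) - (m : ℝ) • η (m + 1) :=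
        ((hmart f hf hb _ _ hk le_rfl).const_smul _).sub
          (hmart.natCast_smul_condExp_integral_empDist hf hb m.le_succ)
    _ = η (m + 1) := by
        ext ω
        simp only [Pi.sub_apply, Pi.smul_apply, smul_eq_mul]
        push_cast
        ring

/-- If the empirical distributions of an infinite sequence in a standard
Borel space form a reverse measure-valued martingale, then for every `k ≥ 1` (one-based) and
every bounded measurable `f`, `E[f(ξ_k) | 𝒯_k] = η_k f` a.s.
(With zero-based indexing the one-based `ξ_k` is `ξ (k - 1)`.) -/
theorem condexp_of_isReverseMVM
    {Ω S : Type*} [MeasurableSpace Ω] [MeasurableSpace S] [StandardBorelSpace S]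
    (P : Measure Ω) [IsProbabilityMeasure P] (ξ : ℕ → Ω → S)
    (hmeas : ∀ i, Measurable (ξ i)) (hmart : IsReverseMVM P ξ) :
    ∀ k : ℕ, 1 ≤ k → ∀ f : S → ℝ, Measurable f → (∃ C, ∀ x, |f x| ≤ C) →
      P[(fun ω => f (ξ (k - 1) ω)) | tailField ξ k]
        =ᵐ[P] fun ω => ∫ x, f x ∂(empDist ξ k ω) :=
  condexp_of_isReverseMVM_general P ξ hmart
end
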